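/- Let H be a real Hilbert space, f : H → ℝ a C¹ function, α ≥ 0, β : [t0,∞) → ℝ a C¹ function with inf_{t≥t0} β(t) > 0, and e : [t0,∞) → H continuous. Write α(t) = α/t. Then x : [t0,∞) → H solves the perturbed implicit-Hessian system ẍ(t) + (α/t)ẋ(t) + ∇f(x(t) + β(t)ẋ(t)) + e(t) = 0 with x(t0)=x0, ẋ(t0)=ẋ0 if and only if the pair (x,y) : [t0,∞) → H × H solves the first-order system ẋ(t) + (1/β(t))x(t) − (1/β(t))y(t) = 0 and ẏ(t) + β(t)(∇f(y(t)) + e(t)) + (1/β(t))(1 − α(t)β(t) + β̇(t))(x(t) − y(t)) = 0, with x(t0)=x0 and y(t0) = x0 + β(t0)ẋ0. -/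

import Mathlib

open MeasureTheory Filter

/-- `g` is of class `C¹` on a set `s` of times. -/
def IsC1On {H : Type*} [NormedAddCommGroup H] [NormedSpace ℝ H]
    (g : ℝ → H) (s : Set ℝ) : Prop :=
  (∀ t ∈ s, DifferentiableAt ℝ g t) ∧ ContinuousOn (deriv g) s

/-- `g` is of class `C²` on a set `s` of times. -/
def IsC2On {H : Type*} [NormedAddCommGroup H] [NormedSpace ℝ H]
    (g : ℝ → H) (s : Set ℝ) : Prop :=
  (∀ t ∈ s, DifferentiableAt ℝ g t) ∧ IsC1On (deriv g) s

/-! With `y = x + β ẋ`, the first equation of the system is `ẋ = β⁻¹ (y - x)`, and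
`ẏ = ẋ + β ẍ + β̇ ẋ`; substituting, the left-hand side of the second equation is exactly
`β` times the left-hand side of (ISIHD-Pert), so the two systems are equivalent as long as
`β` does not vanish. Conversely, a solution `y` of the first-order system agrees with
`x + β ẋ` only on `[t0, ∞)`, so its derivative at `t0` is identified through the half-line. -/

lemma deriv_eq_of_eqOn {E : Type*} [NormedAddCommGroup E] [NormedSpace ℝ E]
    {f g : ℝ → E} {s : Set ℝ} {t : ℝ} (hfg : Set.EqOn f g s) (ht : t ∈ s)
    (hs : UniqueDiffWithinAt ℝ s t) (hf : DifferentiableAt ℝ f t)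
    (hg : DifferentiableAt ℝ g t) : deriv f t = deriv g t := by
  rw [← hf.derivWithin hs, ← hg.derivWithin hs]
  exact derivWithin_congr hfg (hfg ht)

section Algebra

variable {E : Type*} [AddCommGroup E] [Module ℝ E]

lemma add_inv_smul_sub_inv_smul_eq_zero_iff {b : ℝ} (hb : b ≠ 0) {x y v : E} :
    v + b⁻¹ • x - b⁻¹ • y = 0 ↔ y = x + b • v := by
  rw [show v + b⁻¹ • x - b⁻¹ • y = b⁻¹ • (x + b • v - y) by
      rw [smul_sub, smul_add, smul_smul, inv_mul_cancel₀ hb, one_smul]; abel,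
    smul_eq_zero_iff_right (inv_ne_zero hb), sub_eq_zero, eq_comm]

lemma first_order_residual_eq_smul {b b' γ : ℝ} (hb : b ≠ 0) (x v a w : E) :
    (v + (b • a + b' • v)) + b • w + ((1 - γ * b + b') / b) • (x - (x + b • v))
      = b • (a + γ • v + w) := by
  match_scalars <;> field_simp <;> ring

end Algebra

theorem isihd_pert_first_order_equiv_general
    {H : Type*} [NormedAddCommGroup H] [InnerProductSpace ℝ H] [CompleteSpace H]
    (f : H → ℝ) (e x : ℝ → H) (bb : ℝ → ℝ) (t0 α : ℝ) (x0 v0 : H)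
    (hbb : IsC1On bb (Set.Ici t0))
    (hbbpos : ∃ c > 0, ∀ t, t0 ≤ t → c ≤ bb t)
    (hx : IsC2On x (Set.Ici t0)) :
    -- `x` solves (ISIHD-Pert) with the given Cauchy data
    (x t0 = x0 ∧ deriv x t0 = v0 ∧
      ∀ t, t0 ≤ t →
        deriv (deriv x) t + (α / t) • deriv x t
          + gradient f (x t + bb t • deriv x t) + e t = 0)
    ↔
    -- `(x, y)` solves the first-order reformulation with the given Cauchy data
    (∃ y : ℝ → H, (∀ t, t0 ≤ t → DifferentiableAt ℝ y t) ∧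
      x t0 = x0 ∧ y t0 = x0 + bb t0 • v0 ∧
      ∀ t, t0 ≤ t →
        (deriv x t + (bb t)⁻¹ • x t - (bb t)⁻¹ • y t = 0 ∧
         deriv y t + bb t • (gradient f (y t) + e t)
           + ((1 - (α / t) * bb t + deriv bb t) / bb t) • (x t - y t) = 0)) := by
  obtain ⟨c, hc, hcb⟩ := hbbpos
  have hbne : ∀ t, t0 ≤ t → bb t ≠ 0 := fun t ht => (hc.trans_le (hcb t ht)).ne'
  let y : ℝ → H := fun s => x s + bb s • deriv x s
  have hy : ∀ t, t0 ≤ t →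
      HasDerivAt y (deriv x t + (bb t • deriv (deriv x) t + deriv bb t • deriv x t)) t :=
    fun t ht => (hx.1 t ht).hasDerivAt.add ((hbb.1 t ht).hasDerivAt.smul (hx.2.1 t ht).hasDerivAt)
  have hsecond : ∀ t, t0 ≤ t →
      (deriv (deriv x) t + (α / t) • deriv x t + gradient f (y t) + e t = 0 ↔
        deriv y t + bb t • (gradient f (y t) + e t)
          + ((1 - (α / t) * bb t + deriv bb t) / bb t) • (x t - y t) = 0) := fun t ht => by
    rw [(hy t ht).deriv, first_order_residual_eq_smul (hbne t ht), smul_eq_zero, add_assoc _ _ (e t)]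
    simp [hbne t ht]
  constructor
  · rintro ⟨rfl, rfl, hode⟩
    exact ⟨y, fun t ht => (hy t ht).differentiableAt, rfl, rfl, fun t ht =>
      ⟨(add_inv_smul_sub_inv_smul_eq_zero_iff (hbne t ht)).2 rfl, (hsecond t ht).1 (hode t ht)⟩⟩
  · rintro ⟨z, hz, rfl, hz0, hsys⟩
    have hzy : Set.EqOn z y (Set.Ici t0) := fun t ht =>
      (add_inv_smul_sub_inv_smul_eq_zero_iff (hbne t ht)).1 (hsys t ht).1
    refine ⟨rfl, ?_, fun t ht => (hsecond t ht).2 ?_⟩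
    · have h0 := (hzy (Set.mem_Ici.2 le_rfl)).symm.trans hz0
      exact smul_right_injective H (hbne t0 le_rfl) (add_left_cancel h0)
    · have h := (hsys t ht).2
      rwa [deriv_eq_of_eqOn hzy ht (uniqueDiffOn_Ici t0 t ht) (hz t ht) (hy t ht).differentiableAt,
        hzy ht] at h

/-- Equivalence between the perturbed second-order system with implicit Hessian driven
damping (ISIHD-Pert) and its first-order (in time and space) reformulation.
Here `bb` is the coefficient function `β(·)`, assumed `C¹` with positive infimum on
`[t0, ∞)`, and `α(t) = α / t`. -/
theorem isihd_pert_first_order_equiv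
    {H : Type*} [NormedAddCommGroup H] [InnerProductSpace ℝ H] [CompleteSpace H]
    (f : H → ℝ) (e x : ℝ → H) (bb : ℝ → ℝ) (t0 α : ℝ) (x0 v0 : H)
    (ht0 : 0 < t0) (hα : 0 ≤ α)
    (hf : ContDiff ℝ 1 f)
    (hbb : IsC1On bb (Set.Ici t0))
    (hbbpos : ∃ c > 0, ∀ t, t0 ≤ t → c ≤ bb t)
    (he : ContinuousOn e (Set.Ici t0))
    (hx : IsC2On x (Set.Ici t0)) :
    -- `x` solves (ISIHD-Pert) with the given Cauchy data
    (x t0 = x0 ∧ deriv x t0 = v0 ∧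
      ∀ t, t0 ≤ t →
        deriv (deriv x) t + (α / t) • deriv x t
          + gradient f (x t + bb t • deriv x t) + e t = 0)
    ↔
    -- `(x, y)` solves the first-order reformulation with the given Cauchy data
    (∃ y : ℝ → H, (∀ t, t0 ≤ t → DifferentiableAt ℝ y t) ∧
      x t0 = x0 ∧ y t0 = x0 + bb t0 • v0 ∧
      ∀ t, t0 ≤ t →
        (deriv x t + (bb t)⁻¹ • x t - (bb t)⁻¹ • y t = 0 ∧
         deriv y t + bb t • (gradient f (y t) + e t)
           + ((1 - (α / t) * bb t + deriv bb t) / bb t) • (x t - y t) = 0)) :=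
  isihd_pert_first_order_equiv_general f e x bb t0 α x0 v0 hbb hbbpos hx
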